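/- arXiv:1707.00165 — 5 statements merged into one kernel-verified Lean document; each statement's English description precedes it below -/
import Mathlib

section
/- In the random permutation model on {1,…,n}: for each fixed 1 ≤ k ≤ n, the events B_{j,k}, j = 1,…,n, are mutually independent, and for every j ≠ k one has P(B_{j,k}) = 1/|k−j|. -/
open Finset Filter Topology MeasureTheory

/-- `eventA σ j k`: in the random binary search tree built by inserting the keys
`(σ 0 : ℕ) + 1, (σ 1 : ℕ) + 1, …` (so that the keys are `{1, …, n}` and `σ` is the
insertion order), the node labelled `k` lies in the subtree rooted at the node
labelled `j`; equivalently (for `j ≠ k`), `j` occurs before all other elements of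
`{min j k, …, max j k}` in the insertion order.  For `j = k` this is the sure event. -/
def eventA {n : ℕ} (σ : Equiv.Perm (Fin n)) (j k : ℕ) : Prop :=
  ∀ jf mf : Fin n, (jf : ℕ) + 1 = j →
    min j k ≤ (mf : ℕ) + 1 → (mf : ℕ) + 1 ≤ max j k → (mf : ℕ) + 1 ≠ j →
      σ.symm jf < σ.symm mf

/-- `eventB σ j k`: the event `B_{j,k}`, i.e. `A_{j,k-1}` for `j < k`,
`A_{j,k+1}` for `j > k`, and the sure event for `j = k`. -/
def eventB {n : ℕ} (σ : Equiv.Perm (Fin n)) (j k : ℕ) : Prop :=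
  if j < k then eventA σ j (k - 1) else if k < j then eventA σ j (k + 1) else True

open Classical in
/-- probability of an event under the uniform distribution on permutations. -/
noncomputable def probPerm {n : ℕ} (E : Equiv.Perm (Fin n) → Prop) : ℝ :=
  ((Finset.univ.filter fun σ => E σ).card : ℝ) / (Fintype.card (Equiv.Perm (Fin n)) : ℝ)

/-- expectation of a random variable under the uniform distribution on permutations. -/
noncomputable def expPerm {n : ℕ} (X : Equiv.Perm (Fin n) → ℝ) : ℝ :=
  (∑ σ : Equiv.Perm (Fin n), X σ) / (Fintype.card (Equiv.Perm (Fin n)) : ℝ)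

/-- variance of a random variable under the uniform distribution on permutations. -/
noncomputable def varPerm {n : ℕ} (X : Equiv.Perm (Fin n) → ℝ) : ℝ :=
  expPerm fun σ => (X σ - expPerm X) ^ 2

open Classical in
/-- real-valued indicator of a proposition. -/
noncomputable def ind (P : Prop) : ℝ := if P then 1 else 0

/-- `depthD σ k = D_k(n)`, the depth of the node labelled `k`. -/
noncomputable def depthD {n : ℕ} (σ : Equiv.Perm (Fin n)) (k : ℕ) : ℝ :=
  (∑ j : Fin n, ind (eventA σ ((j : ℕ) + 1) k)) - 1

/-- `weightW σ k = W_k(n)`, the weighted depth of the node labelled `k`. -/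
noncomputable def weightW {n : ℕ} (σ : Equiv.Perm (Fin n)) (k : ℕ) : ℝ :=
  ∑ j : Fin n, ((j : ℕ) + 1 : ℝ) * ind (eventA σ ((j : ℕ) + 1) k)

/-- `barW σ k = \bar W_k(n) = Σ_{j=1}^n j · 1_{B_{j,k}}`. -/
noncomputable def barW {n : ℕ} (σ : Equiv.Perm (Fin n)) (k : ℕ) : ℝ :=
  ∑ j : Fin n, ((j : ℕ) + 1 : ℝ) * ind (eventB σ ((j : ℕ) + 1) k)

/-- first-order harmonic number `H^{(1)}_m = Σ_{j=1}^m 1/j`. -/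
noncomputable def H1 (m : ℕ) : ℝ := ∑ j ∈ Finset.range m, (1 : ℝ) / (j + 1)

/-- second-order harmonic number `H^{(2)}_m = Σ_{j=1}^m 1/j²`. -/
noncomputable def H2 (m : ℕ) : ℝ := ∑ j ∈ Finset.range m, (1 : ℝ) / (j + 1) ^ 2

/-!
`B_{j,k}` says that key `j` is inserted first among a block of consecutive keys: `{j, …, k - 1}`
for `j < k` and `{k + 1, …, j}` for `j > k`. For fixed `k` these blocks form two chains on either
side of `k`, so any two of them are disjoint or one lies in the other without containing its
first element. For such a family the events "the anchor of `U` is inserted first in `U`" are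
independent with probabilities `1 / #U`, because transpositions inside a smallest block preserve
the events of all other blocks while permuting which element of that block comes first.
-/

open Equiv

section Laminar

variable {α : Type*} [LinearOrder α]

/-- `σ` is read as an insertion order: `σ.symm a` is the time at which `a` is inserted. -/
def IsFirst (σ : Perm α) (U : Finset α) (a : α) : Prop :=
  ∀ b ∈ U, b ≠ a → σ.symm a < σ.symm b

instance (σ : Perm α) (U : Finset α) (a : α) : Decidable (IsFirst σ U a) := by
  unfold IsFirst; infer_instance

lemma symm_swap_mul_apply (σ : Perm α) (x y b : α) :
    (swap x y * σ).symm b = σ.symm (swap x y b) := by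
  rw [Perm.mul_def, symm_trans_apply, symm_swap]

lemma swap_apply_mem {U : Finset α} {x y b : α} (hx : x ∈ U) (hy : y ∈ U) (hb : b ∈ U) :
    swap x y b ∈ U := by
  rw [swap_apply_def]
  split_ifs <;> assumption

lemma exists_isFirst (σ : Perm α) {U : Finset α} (hU : U.Nonempty) : ∃ u ∈ U, IsFirst σ U u := by
  obtain ⟨u, hu, hmin⟩ := U.exists_min_image σ.symm hU
  exact ⟨u, hu, fun b hb hbu => (hmin b hb).lt_of_ne (σ.symm.injective.ne hbu.symm)⟩

lemma IsFirst.eq {σ : Perm α} {U : Finset α} {u v : α} (hu : IsFirst σ U u) (hv : IsFirst σ U v)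
    (hu' : u ∈ U) (hv' : v ∈ U) : u = v := by
  by_contra huv
  exact (hu v hv' (Ne.symm huv)).asymm (hv u hu' huv)

lemma IsFirst.swap_mul {σ : Perm α} {U : Finset α} {u v : α} (h : IsFirst σ U u)
    (hv : v ∈ U) : IsFirst (swap u v * σ) U v := by
  intro b hb hbv
  rw [symm_swap_mul_apply, symm_swap_mul_apply, swap_apply_right]
  by_cases hbu : b = u
  · rw [hbu, swap_apply_left]
    exact h v hv (fun hvu => hbv (hbu.trans hvu.symm))
  · rw [swap_apply_of_ne_of_ne hbu hbv]
    exact h b hb hbu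

lemma IsFirst.swap_mul_of_subset_or_disjoint {σ : Perm α} {U V : Finset α} {c x y : α}
    (h : IsFirst σ V c) (hc : c ∈ V) (hUV : U ⊆ V.erase c ∨ Disjoint U V)
    (hx : x ∈ U) (hy : y ∈ U) : IsFirst (swap x y * σ) V c := by
  have hcU : c ∉ U := by
    rcases hUV with hUV | hUV
    · exact fun hcU => (mem_erase.1 (hUV hcU)).1 rfl
    · exact fun hcU => disjoint_left.1 hUV hcU hc
  intro b hb hbc
  rw [symm_swap_mul_apply, symm_swap_mul_apply,
    swap_apply_of_ne_of_ne (ne_of_mem_of_not_mem hx hcU).symm (ne_of_mem_of_not_mem hy hcU).symm]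
  by_cases hbU : b ∈ U
  · rcases hUV with hUV | hUV
    · obtain ⟨hne, hmem⟩ := mem_erase.1 (hUV (swap_apply_mem hx hy hbU))
      exact h _ hmem hne
    · exact absurd hb (disjoint_left.1 hUV hbU)
  · rw [swap_apply_of_ne_of_ne (ne_of_mem_of_not_mem hx hbU).symm
      (ne_of_mem_of_not_mem hy hbU).symm]
    exact h b hb hbc

variable [Fintype α]

/-- Left multiplication by `swap u a` matches the `σ` in which `u` comes first in `U` with those
in which `a` does. -/
lemma card_filter_eq_card_mul_card_filter_isFirst (Q : Perm α → Prop) [DecidablePred Q]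
    {U : Finset α} {a : α} (ha : a ∈ U)
    (hQ : ∀ σ, ∀ x ∈ U, ∀ y ∈ U, Q σ → Q (swap x y * σ)) :
    #{σ | Q σ} = #U * #{σ | Q σ ∧ IsFirst σ U a} := by
  have hsplit : ({σ | Q σ} : Finset (Perm α)) = U.biUnion fun u => {σ | Q σ ∧ IsFirst σ U u} := by
    ext σ
    simp only [mem_filter, mem_univ, true_and, mem_biUnion]
    constructor
    · intro hσ
      obtain ⟨u, hu, hfirst⟩ := exists_isFirst σ ⟨a, ha⟩
      exact ⟨u, hu, hσ, hfirst⟩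
    · rintro ⟨u, -, hσ, -⟩
      exact hσ
  have hdisj : (U : Set α).PairwiseDisjoint fun u => ({σ | Q σ ∧ IsFirst σ U u} : Finset _) := by
    intro u hu v hv huv
    simp only [Function.onFun, disjoint_left, mem_filter, mem_univ, true_and]
    exact fun σ hu' hv' => huv (hu'.2.eq hv'.2 hu hv)
  have hfiber : ∀ u ∈ U, #{σ | Q σ ∧ IsFirst σ U u} = #{σ | Q σ ∧ IsFirst σ U a} := by
    intro u hu
    refine card_nbij' (swap u a * ·) (swap u a * ·) ?_ ?_ ?_ ?_
    · intro σ hσ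
      simp only [coe_filter, mem_univ, true_and, Set.mem_ofPred_eq] at hσ ⊢
      exact ⟨hQ σ u hu a ha hσ.1, hσ.2.swap_mul ha⟩
    · intro σ hσ
      simp only [coe_filter, mem_univ, true_and, Set.mem_ofPred_eq] at hσ ⊢
      rw [swap_comm]
      exact ⟨hQ σ a ha u hu hσ.1, hσ.2.swap_mul hu⟩
    · intro σ _
      exact swap_mul_self_mul u a σ
    · intro σ _
      exact swap_mul_self_mul u a σ
  rw [hsplit, card_biUnion hdisj, sum_congr rfl hfiber, sum_const, smul_eq_mul]

/-- Split off a smallest block: no other block is nested in it, so the remaining events are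
invariant under transpositions inside it. -/
theorem card_filter_forall_isFirst_mul_prod_card {ι : Type*} (a : ι → α) (U : ι → Finset α)
    (S : Finset ι) (ha : ∀ i ∈ S, a i ∈ U i)
    (hU : ∀ i ∈ S, ∀ j ∈ S, i ≠ j →
      U i ⊆ (U j).erase (a j) ∨ U j ⊆ (U i).erase (a i) ∨ Disjoint (U i) (U j)) :
    #{σ : Perm α | ∀ i ∈ S, IsFirst σ (U i) (a i)} * ∏ i ∈ S, #(U i) = Fintype.card (Perm α) := by
  classical
  induction S using Finset.strongInduction with
  | _ S ih =>
  rcases S.eq_empty_or_nonempty with rfl | hS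
  · simp
  obtain ⟨i₀, hi₀, hmin⟩ := S.exists_min_image (fun i => #(U i)) hS
  have hQ : ∀ σ, ∀ x ∈ U i₀, ∀ y ∈ U i₀, (∀ i ∈ S.erase i₀, IsFirst σ (U i) (a i)) →
      ∀ i ∈ S.erase i₀, IsFirst (swap x y * σ) (U i) (a i) := by
    intro σ x hx y hy hσ i hi
    obtain ⟨hne, hiS⟩ := mem_erase.1 hi
    refine (hσ i hi).swap_mul_of_subset_or_disjoint (ha i hiS) ?_ hx hy
    rcases hU i₀ hi₀ i hiS hne.symm with h | h | h
    · exact Or.inl h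
    · have := (card_le_card h).trans_lt (card_erase_lt_of_mem (ha i₀ hi₀))
      exact absurd (hmin i hiS) this.not_ge
    · exact Or.inr h
  have hsplit := card_filter_eq_card_mul_card_filter_isFirst _ (ha i₀ hi₀) hQ
  have hcombine : #{σ : Perm α | (∀ i ∈ S.erase i₀, IsFirst σ (U i) (a i)) ∧
      IsFirst σ (U i₀) (a i₀)} = #{σ : Perm α | ∀ i ∈ S, IsFirst σ (U i) (a i)} := by
    congr 1
    refine filter_congr fun σ _ => ?_
    rw [← insert_erase hi₀, forall_mem_insert, erase_insert_eq_erase, erase_idem, and_comm]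
  rw [← ih _ (erase_ssubset hi₀) (fun i hi => ha i (mem_of_mem_erase hi))
      (fun i hi j hj => hU i (mem_of_mem_erase hi) j (mem_of_mem_erase hj)),
    hsplit, hcombine, ← mul_prod_erase S _ hi₀]
  ring

end Laminar

theorem probPerm_eq_card_div {n : ℕ} (E : Perm (Fin n) → Prop) [DecidablePred E] :
    probPerm E = #(univ.filter E) / (Fintype.card (Perm (Fin n)) : ℝ) := by
  unfold probPerm
  congr

theorem probPerm_forall_isFirst {n : ℕ} {ι : Type*} (a : ι → Fin n) (U : ι → Finset (Fin n))
    (S : Finset ι) (ha : ∀ i ∈ S, a i ∈ U i)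
    (hU : ∀ i ∈ S, ∀ j ∈ S, i ≠ j →
      U i ⊆ (U j).erase (a j) ∨ U j ⊆ (U i).erase (a i) ∨ Disjoint (U i) (U j)) :
    probPerm (fun σ => ∀ i ∈ S, IsFirst σ (U i) (a i)) = ∏ i ∈ S, 1 / (#(U i) : ℝ) := by
  have hcard : (0 : ℝ) < ∏ i ∈ S, (#(U i) : ℝ) :=
    prod_pos fun i hi => by exact_mod_cast card_pos.2 ⟨a i, ha i hi⟩
  rw [probPerm_eq_card_div, prod_div_distrib, prod_const_one, div_eq_div_iff (by positivity)
    hcard.ne', one_mul, ← card_filter_forall_isFirst_mul_prod_card a U S ha hU]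
  norm_cast

lemma card_filter_fin_add_one_mem {n : ℕ} {s : Finset ℕ} (hs : s ⊆ Icc 1 n) :
    #{b : Fin n | (b : ℕ) + 1 ∈ s} = #s := by
  refine card_nbij (fun b => (b : ℕ) + 1) (fun b hb => by simpa using hb) ?_ ?_
  · intro b _ c _ h
    exact Fin.ext (Nat.add_right_cancel h)
  · intro m hm
    have hm' := mem_Icc.1 (hs hm)
    exact ⟨⟨m - 1, by omega⟩, by simpa [Nat.sub_add_cancel hm'.1] using hm,
      Nat.sub_add_cancel hm'.1⟩

/-- The keys whose relative insertion order decides `B_{j,k}`, with `j = i + 1` and key `b + 1`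
for `b : Fin n`: `{j, …, k - 1}` for `j < k`, `{k + 1, …, j}` for `j > k`, and `{k}` for `j = k`. -/
def blockB (n k : ℕ) (i : Fin n) : Finset (Fin n) :=
  {b | (b : ℕ) + 1 ∈ Icc (min ((i : ℕ) + 1) (k + 1)) (max ((i : ℕ) + 1) (k - 1))}

section blockB

variable {n k : ℕ}

lemma mem_blockB {i b : Fin n} :
    b ∈ blockB n k i ↔
      min ((i : ℕ) + 1) (k + 1) ≤ b + 1 ∧ (b : ℕ) + 1 ≤ max ((i : ℕ) + 1) (k - 1) := by
  simp [blockB]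

lemma self_mem_blockB (i : Fin n) : i ∈ blockB n k i := by
  rw [mem_blockB]; omega

lemma eventA_iff (σ : Perm (Fin n)) (i : Fin n) (m : ℕ) :
    eventA σ ((i : ℕ) + 1) m ↔ ∀ b : Fin n,
      min ((i : ℕ) + 1) m ≤ b + 1 ∧ (b : ℕ) + 1 ≤ max ((i : ℕ) + 1) m → b ≠ i →
        σ.symm i < σ.symm b := by
  constructor
  · intro h b hb hbi
    exact h i b rfl hb.1 hb.2 fun h' => hbi (Fin.ext (by omega))
  · rintro h jf b hjf h₁ h₂ hbi
    obtain rfl : jf = i := Fin.ext (by omega)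
    exact h b ⟨h₁, h₂⟩ fun h' => hbi (by rw [h'])

lemma eventB_iff_isFirst (σ : Perm (Fin n)) (i : Fin n) :
    eventB σ ((i : ℕ) + 1) k ↔ IsFirst σ (blockB n k i) i := by
  simp only [eventB, IsFirst, mem_blockB]
  split_ifs with hlt hgt
  · rw [eventA_iff, show min ((i : ℕ) + 1) (k - 1) = min ((i : ℕ) + 1) (k + 1) by omega]
  · rw [eventA_iff, show max ((i : ℕ) + 1) (k + 1) = max ((i : ℕ) + 1) (k - 1) by omega]
  · refine iff_of_true trivial fun b hb hbi => absurd (Fin.ext (by omega)) hbi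

lemma blockB_subset_or_disjoint {i j : Fin n} (hij : i ≠ j) :
    blockB n k i ⊆ (blockB n k j).erase j ∨ blockB n k j ⊆ (blockB n k i).erase i ∨
      Disjoint (blockB n k i) (blockB n k j) := by
  have hij' : (i : ℕ) ≠ j := Fin.val_ne_of_ne hij
  simp only [subset_iff, disjoint_left, mem_erase, mem_blockB, ne_eq, Fin.ext_iff]
  rcases Nat.lt_or_gt_of_ne hij' with h | h <;>
    rcases Nat.lt_trichotomy ((i : ℕ) + 1) k with hi | hi | hi <;>
    rcases Nat.lt_trichotomy ((j : ℕ) + 1) k with hj | hj | hj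
  all_goals first
    | exact Or.inl fun b hb => by omega
    | exact Or.inr (Or.inl fun b hb => by omega)
    | exact Or.inr (Or.inr fun b hb hb' => by omega)

lemma card_blockB_of_ne (hk : k ≤ n) {i : Fin n} (hik : (i : ℕ) + 1 ≠ k) :
    #(blockB n k i) = ((k : ℤ) - ((i : ℕ) + 1 : ℕ)).natAbs := by
  rw [blockB, card_filter_fin_add_one_mem, Nat.card_Icc]
  · omega
  · intro m hm
    rw [mem_Icc] at hm ⊢
    omega

end blockB

theorem eventB_independent_and_prob_general (n k : ℕ) (hk2 : k ≤ n) :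
    (∀ S : Finset (Fin n),
      probPerm (fun σ : Equiv.Perm (Fin n) => ∀ j ∈ S, eventB σ ((j : ℕ) + 1) k)
        = ∏ j ∈ S, probPerm (fun σ : Equiv.Perm (Fin n) => eventB σ ((j : ℕ) + 1) k)) ∧
    (∀ j : ℕ, 1 ≤ j → j ≤ n → j ≠ k →
      probPerm (fun σ : Equiv.Perm (Fin n) => eventB σ j k) = 1 / |(k : ℝ) - (j : ℝ)|) := by
  have hjoint (S : Finset (Fin n)) :
      probPerm (fun σ : Perm (Fin n) => ∀ j ∈ S, eventB σ ((j : ℕ) + 1) k)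
        = ∏ j ∈ S, 1 / (#(blockB n k j) : ℝ) := by
    simp_rw [eventB_iff_isFirst]
    exact probPerm_forall_isFirst id _ S (fun j _ => self_mem_blockB j)
      fun i _ j _ hij => blockB_subset_or_disjoint hij
  have hsingle (j : Fin n) :
      probPerm (fun σ : Perm (Fin n) => eventB σ ((j : ℕ) + 1) k) = 1 / (#(blockB n k j) : ℝ) := by
    simpa using hjoint {j}
  refine ⟨fun S => by simp_rw [hjoint, hsingle], fun j hj₁ hjn hjk => ?_⟩
  obtain ⟨i, rfl⟩ : ∃ i : Fin n, (i : ℕ) + 1 = j := ⟨⟨j - 1, by omega⟩, by simp; omega⟩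
  rw [hsingle, card_blockB_of_ne hk2 hjk, Nat.cast_natAbs]
  norm_cast

/-- In the random permutation model on `{1,…,n}`: for each fixed
`1 ≤ k ≤ n`, the events `B_{j,k}`, `j = 1,…,n`, are mutually independent, and for every
`j ≠ k` one has `P(B_{j,k}) = 1/|k−j|`. -/
theorem eventB_independent_and_prob (n k : ℕ) (hk1 : 1 ≤ k) (hk2 : k ≤ n) :
    (∀ S : Finset (Fin n),
      probPerm (fun σ : Equiv.Perm (Fin n) => ∀ j ∈ S, eventB σ ((j : ℕ) + 1) k)
        = ∏ j ∈ S, probPerm (fun σ : Equiv.Perm (Fin n) => eventB σ ((j : ℕ) + 1) k)) ∧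
    (∀ j : ℕ, 1 ≤ j → j ≤ n → j ≠ k →
      probPerm (fun σ : Equiv.Perm (Fin n) => eventB σ j k) = 1 / |(k : ℝ) - (j : ℝ)|) :=
  eventB_independent_and_prob_general n k hk2
end

section
/- In the random permutation model on {1,…,n}: for every 1 ≤ k ≤ n, the expectation of \bar W_k(n) := Σ_{j=1}^n j·1_{B_{j,k}} equals k(H^{(1)}_{k,n} − 1) + n + 1. -/
open Finset Filter Topology MeasureTheory

/-!
By linearity, `E[\bar W_k] = Σ_j j · P(B_{j,k})`. For `j ≠ k` the event `B_{j,k}` says that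
`j` is inserted first among the `|j - k|` keys from `j` up to, but excluding, `k`. Composing with
a transposition shows that every element of a set `T` of keys is inserted first with the same
probability, hence with probability `1 / |T|`; so `P(B_{j,k}) = 1 / |j - k|`. Finally
`Σ_{j<k} j / (k - j) = k H_{k-1} - (k - 1)` and `Σ_{j>k} j / (j - k) = k H_{n-k} + (n - k)`.
-/

section FirstAmong

variable {α : Type*} [Fintype α] [LinearOrder α]

lemma card_filter_forall_le_eq_of_mem {T : Finset α} {x z : α} (hx : x ∈ T) (hz : z ∈ T) :
    #{π : Equiv.Perm α | ∀ y ∈ T, π x ≤ π y} = #{π : Equiv.Perm α | ∀ y ∈ T, π z ≤ π y} := by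
  have swap_mem : ∀ y ∈ T, Equiv.swap x z y ∈ T := fun y hy => by
    rcases eq_or_ne y x with rfl | hyx
    · simpa
    rcases eq_or_ne y z with rfl | hyz
    · simpa
    simpa [Equiv.swap_apply_of_ne_of_ne hyx hyz]
  refine card_equiv (Equiv.mulRight (Equiv.swap x z)) fun π => ?_
  simp only [mem_filter, mem_univ, true_and, Equiv.coe_mulRight, Equiv.Perm.mul_apply,
    Equiv.swap_apply_right]
  constructor
  · exact fun h y hy => h _ (swap_mem y hy)
  · intro h y hy
    simpa using h _ (swap_mem y hy)

lemma card_filter_forall_le_mul_card {T : Finset α} {x : α} (hx : x ∈ T) :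
    #{π : Equiv.Perm α | ∀ y ∈ T, π x ≤ π y} * #T = Fintype.card (Equiv.Perm α) := by
  have hT : T.Nonempty := ⟨x, hx⟩
  let argmin (π : Equiv.Perm α) : α := π.symm ((T.image π).min' (hT.image π))
  have argmin_mem (π : Equiv.Perm α) : argmin π ∈ T := by
    obtain ⟨a, ha, hπa⟩ := mem_image.mp ((T.image π).min'_mem (hT.image π))
    simpa [argmin, ← hπa]
  have argmin_eq_iff (π : Equiv.Perm α) {z : α} (hz : z ∈ T) :
      argmin π = z ↔ ∀ y ∈ T, π z ≤ π y := by
    simp only [argmin, Equiv.symm_apply_eq]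
    constructor
    · rintro h y hy
      exact h.symm ▸ (T.image π).min'_le _ (mem_image_of_mem π hy)
    · intro h
      refine le_antisymm ((T.image π).min'_le _ (mem_image_of_mem π hz)) (le_min' _ _ _ ?_)
      simpa using h
  calc #{π : Equiv.Perm α | ∀ y ∈ T, π x ≤ π y} * #T
      = ∑ z ∈ T, #{π : Equiv.Perm α | ∀ y ∈ T, π z ≤ π y} := by
        rw [sum_congr rfl fun z hz => (card_filter_forall_le_eq_of_mem hx hz).symm, sum_const,
          smul_eq_mul, mul_comm]
    _ = ∑ z ∈ T, #{π : Equiv.Perm α | argmin π = z} := by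
        refine sum_congr rfl fun z hz => ?_
        simp only [argmin_eq_iff _ hz]
    _ = Fintype.card (Equiv.Perm α) :=
        (card_eq_sum_card_fiberwise fun π _ => argmin_mem π).symm

end FirstAmong

lemma probPerm_forall_symm_le {n : ℕ} {T : Finset (Fin n)} {x : Fin n} (hx : x ∈ T) :
    probPerm (fun σ : Equiv.Perm (Fin n) => ∀ y ∈ T, σ.symm x ≤ σ.symm y) = (#T : ℝ)⁻¹ := by
  have hT : (#T : ℝ) ≠ 0 := by exact_mod_cast (card_pos.mpr ⟨x, hx⟩).ne'
  have hN : (Fintype.card (Equiv.Perm (Fin n)) : ℝ) ≠ 0 := by positivity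
  rw [probPerm, div_eq_iff hN, ← card_filter_forall_le_mul_card hx, Nat.cast_mul,
    inv_mul_eq_div, mul_div_cancel_right₀ _ hT]
  exact_mod_cast card_equiv (Equiv.inv _) fun σ => by simp [Equiv.Perm.inv_def]

lemma eventA_val_succ_iff {n : ℕ} (σ : Equiv.Perm (Fin n)) (a b : Fin n) :
    eventA σ (a + 1) (b + 1) ↔ ∀ y ∈ uIcc a b, σ.symm a ≤ σ.symm y := by
  have mem_uIcc_iff (y : Fin n) : y ∈ uIcc a b ↔
      min ((a : ℕ) + 1) (b + 1) ≤ y + 1 ∧ (y : ℕ) + 1 ≤ max ((a : ℕ) + 1) (b + 1) := by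
    simp only [mem_uIcc', Fin.le_iff_val_le_val]
    omega
  constructor
  · intro h y hy
    rcases eq_or_ne y a with rfl | hya
    · exact le_rfl
    · have hy' := (mem_uIcc_iff y).1 hy
      exact (h a y rfl hy'.1 hy'.2 fun he => hya (Fin.ext (by omega))).le
  · rintro h jf mf hjf hlo hhi hne
    obtain rfl : jf = a := Fin.ext (by omega)
    refine (h mf ((mem_uIcc_iff mf).2 ⟨hlo, hhi⟩)).lt_of_ne fun he => hne ?_
    rw [σ.symm.injective he]

lemma probPerm_eventA_val_succ {n : ℕ} (a b : Fin n) :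
    probPerm (fun σ : Equiv.Perm (Fin n) => eventA σ (a + 1) (b + 1))
      = (|(a : ℝ) - b| + 1)⁻¹ := by
  simp only [eventA_val_succ_iff]
  rw [probPerm_forall_symm_le left_mem_uIcc, Fin.card_uIcc]
  push_cast [Nat.cast_natAbs]
  rw [abs_sub_comm]

lemma probPerm_eventA {n j m : ℕ} (hj1 : 1 ≤ j) (hjn : j ≤ n) (hm1 : 1 ≤ m) (hmn : m ≤ n) :
    probPerm (fun σ : Equiv.Perm (Fin n) => eventA σ j m) = (|(j : ℝ) - m| + 1)⁻¹ := by
  obtain ⟨a, rfl⟩ : ∃ a : Fin n, (a : ℕ) + 1 = j := ⟨⟨j - 1, by omega⟩, by simp; omega⟩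
  obtain ⟨b, rfl⟩ : ∃ b : Fin n, (b : ℕ) + 1 = m := ⟨⟨m - 1, by omega⟩, by simp; omega⟩
  rw [probPerm_eventA_val_succ]
  push_cast
  rw [add_sub_add_right_eq_sub]

lemma probPerm_eventB {n j k : ℕ} (hj1 : 1 ≤ j) (hjn : j ≤ n) (hk1 : 1 ≤ k) (hkn : k ≤ n) :
    probPerm (fun σ : Equiv.Perm (Fin n) => eventB σ j k)
      = if j = k then 1 else |(j : ℝ) - k|⁻¹ := by
  rcases lt_trichotomy j k with hjk | rfl | hkj
  · have hjk' : (j : ℝ) + 1 ≤ k := by exact_mod_cast hjk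
    simp only [eventB, hjk, if_true, hjk.ne, if_false]
    rw [probPerm_eventA hj1 hjn (by omega) (by omega), Nat.cast_sub (by omega), Nat.cast_one,
      abs_of_nonpos (by linarith), abs_of_neg (by linarith)]
    ring
  · simp [eventB, probPerm]
  · have hkj' : (k : ℝ) + 1 ≤ j := by exact_mod_cast hkj
    simp only [eventB, hkj, if_true, hkj.ne', not_lt_of_gt hkj, if_false]
    rw [probPerm_eventA hj1 hjn (by omega) (by omega), Nat.cast_add_one,
      abs_of_nonneg (by linarith), abs_of_pos (by linarith)]
    ring

lemma expPerm_sum_mul_ind {n : ℕ} {ι : Type*} (s : Finset ι) (c : ι → ℝ)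
    (E : ι → Equiv.Perm (Fin n) → Prop) :
    expPerm (fun σ => ∑ i ∈ s, c i * ind (E i σ)) = ∑ i ∈ s, c i * probPerm (E i) := by
  simp only [expPerm, probPerm, sum_comm (s := univ) (t := s), ← mul_sum, sum_div]
  refine sum_congr rfl fun i _ => ?_
  rw [mul_div_assoc, ← sum_boole]
  rfl

lemma sum_range_mul_inv_succ_add (c d : ℝ) (m : ℕ) :
    ∑ i ∈ range m, (c * (1 / ((i : ℝ) + 1)) + d) = c * H1 m + d * m := by
  rw [sum_add_distrib, ← mul_sum, sum_const, card_range, nsmul_eq_mul, mul_comm d, H1]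

lemma sum_range_succ_mul_inv_abs_sub (l m : ℕ) :
    ∑ j ∈ range (l + 1 + m),
        ((j : ℝ) + 1) * (if j + 1 = l + 1 then 1 else |(j : ℝ) + 1 - (l + 1)|⁻¹)
      = (l + 1) * (H1 l + H1 m - 1) + (l + 1 + m) + 1 := by
  -- after `sum_range_reflect`, the key `l - i` below `l + 1` is indexed by its distance `i + 1`
  have lower : ∀ i ∈ range l,
      (((l - 1 - i : ℕ) : ℝ) + 1) * (if l - 1 - i + 1 = l + 1 then 1
        else |((l - 1 - i : ℕ) : ℝ) + 1 - (l + 1)|⁻¹)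
      = (l + 1) * (1 / ((i : ℝ) + 1)) + -1 := by
    intro i hi
    have hil : i + 1 ≤ l := mem_range.mp hi
    rw [if_neg (by omega), Nat.cast_sub (by omega), Nat.cast_sub (by omega), Nat.cast_one,
      show (l : ℝ) - 1 - i + 1 - (l + 1) = -(i + 1) by ring, abs_neg, abs_of_pos (by positivity)]
    field_simp
    ring
  have upper : ∀ i ∈ range m,
      (((l + 1 + i : ℕ) : ℝ) + 1) * (if l + 1 + i + 1 = l + 1 then 1
        else |((l + 1 + i : ℕ) : ℝ) + 1 - (l + 1)|⁻¹)
      = (l + 1) * (1 / ((i : ℝ) + 1)) + 1 := by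
    intro i _
    rw [if_neg (by omega)]
    push_cast
    rw [show (l : ℝ) + 1 + i + 1 - (l + 1) = i + 1 by ring, abs_of_pos (by positivity)]
    field_simp
    ring
  rw [sum_range_add, sum_range_succ, ← sum_range_reflect, sum_congr rfl lower, sum_congr rfl upper,
    sum_range_mul_inv_succ_add, sum_range_mul_inv_succ_add, if_pos rfl]
  ring

/-- In the random permutation model on `{1,…,n}`: for every `1 ≤ k ≤ n`,
the expectation of `\bar W_k(n) = Σ_{j=1}^n j·1_{B_{j,k}}` equals
`k(H^{(1)}_{k,n} − 1) + n + 1`, where `H^{(1)}_{k,n} = H^{(1)}_{k-1} + H^{(1)}_{n-k}`. -/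
theorem expectation_barW (n k : ℕ) (hk1 : 1 ≤ k) (hk2 : k ≤ n) :
    expPerm (fun σ : Equiv.Perm (Fin n) => barW σ k)
      = (k : ℝ) * (H1 (k - 1) + H1 (n - k) - 1) + n + 1 := by
  obtain ⟨l, rfl⟩ : ∃ l, k = l + 1 := ⟨k - 1, by omega⟩
  obtain ⟨m, rfl⟩ : ∃ m, n = l + 1 + m := ⟨n - (l + 1), by omega⟩
  calc expPerm (fun σ : Equiv.Perm (Fin (l + 1 + m)) => barW σ (l + 1))
      = ∑ j : Fin (l + 1 + m),
          ((j : ℝ) + 1) * probPerm (fun σ => eventB σ ((j : ℕ) + 1) (l + 1)) :=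
        expPerm_sum_mul_ind _ _ _
    _ = ∑ j ∈ range (l + 1 + m),
          ((j : ℝ) + 1) * (if j + 1 = l + 1 then 1 else |(j : ℝ) + 1 - (l + 1)|⁻¹) := by
        rw [← Fin.sum_univ_eq_sum_range]
        refine sum_congr rfl fun j _ => ?_
        rw [probPerm_eventB (by omega) j.isLt (by omega) (by omega)]
        push_cast
        rfl
    _ = _ := by
        rw [sum_range_succ_mul_inv_abs_sub, Nat.add_sub_cancel, Nat.add_sub_cancel_left]
        push_cast
        ring
end

section
/- There exists a constant C > 0 such that for all n ≥ 2 and all 1 ≤ k ≤ n, in the random permutation model on {1,…,n}: |E[W_k(n)] − k·log(k(n−k+1)) − n| ≤ C·(k + log n), where log is the natural logarithm. -/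
/-!
The node labelled `j` is an ancestor of the node labelled `k` exactly when `j` is inserted first
among the `|j - k| + 1` keys between them, which for a uniform permutation has probability
`1 / (|j - k| + 1)`. Summing `j / (|j - k| + 1)` over `j` gives the exact value
`E[W_k(n)] = (k + 1) H_k + (k - 1) H_{n-k+1} + n - 3k + 1`, and `log m ≤ H_m ≤ 1 + log m`
turns it into the estimate.
-/

open Finset Filter Topology MeasureTheory

namespace Equiv.Perm

variable {α : Type*} [LinearOrder α]

/-- `σ.symm x` is the time at which `x` is inserted, so `a` is inserted before every other
element of `S`. -/
def IsFirstIn (σ : Perm α) (S : Finset α) (a : α) : Prop :=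
  ∀ i ∈ S, i ≠ a → σ.symm a < σ.symm i

theorem IsFirstIn.swap_mul {σ : Perm α} {S : Finset α} {a b : α} (h : σ.IsFirstIn S a)
    (hb : b ∈ S) : (swap a b * σ).IsFirstIn S b := by
  intro i hi hib
  simp only [Perm.mul_def, symm_trans_apply, symm_swap, swap_apply_right]
  rcases eq_or_ne i a with rfl | hia
  · rw [swap_apply_left]
    exact h b hb (Ne.symm hib)
  · rw [swap_apply_of_ne_of_ne hia hib]
    exact h i hi hia

theorem IsFirstIn.unique {σ : Perm α} {S : Finset α} {a b : α} (ha : a ∈ S) (hb : b ∈ S)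
    (h₁ : σ.IsFirstIn S a) (h₂ : σ.IsFirstIn S b) : a = b := by
  by_contra hne
  exact (h₁ b hb (Ne.symm hne)).asymm (h₂ a ha hne)

theorem exists_isFirstIn (σ : Perm α) {S : Finset α} (hS : S.Nonempty) :
    ∃ a ∈ S, σ.IsFirstIn S a := by
  obtain ⟨a, ha, hmin⟩ := S.exists_min_image σ.symm hS
  exact ⟨a, ha, fun i hi hia => (hmin i hi).lt_of_ne (σ.symm.injective.ne (Ne.symm hia))⟩

variable [Fintype α]

open scoped Classical in
theorem card_isFirstIn_eq {S : Finset α} {a b : α} (ha : a ∈ S) (hb : b ∈ S) :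
    #{σ : Perm α | σ.IsFirstIn S a} = #{σ : Perm α | σ.IsFirstIn S b} := by
  refine card_nbij' (swap a b * ·) (swap a b * ·) (fun σ hσ => ?_) (fun σ hσ => ?_)
    (fun σ _ => swap_mul_self_mul a b σ) (fun σ _ => swap_mul_self_mul a b σ)
  · simp only [mem_coe, mem_filter, mem_univ, true_and] at hσ ⊢
    exact hσ.swap_mul hb
  · simp only [mem_coe, mem_filter, mem_univ, true_and] at hσ ⊢
    rw [swap_comm]
    exact hσ.swap_mul ha

open scoped Classical in
/-- Exactly one element of `S` is inserted first, and each one equally often. -/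
theorem card_isFirstIn_mul_card {S : Finset α} {a : α} (ha : a ∈ S) :
    #{σ : Perm α | σ.IsFirstIn S a} * #S = Fintype.card (Perm α) := by
  let firstIn : α → Finset (Perm α) := fun b => {σ | σ.IsFirstIn S b}
  have hcover : S.biUnion firstIn = univ := by
    refine eq_univ_of_forall fun σ => ?_
    obtain ⟨b, hb, hσ⟩ := exists_isFirstIn σ ⟨a, ha⟩
    exact mem_biUnion.2 ⟨b, hb, mem_filter.2 ⟨mem_univ _, hσ⟩⟩
  have hdisj : (S : Set α).PairwiseDisjoint firstIn :=
    fun b hb c hc hbc => disjoint_left.2 fun σ hσb hσc =>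
      hbc (IsFirstIn.unique hb hc (mem_filter.1 hσb).2 (mem_filter.1 hσc).2)
  calc #{σ : Perm α | σ.IsFirstIn S a} * #S = ∑ b ∈ S, #(firstIn b) := by
        rw [sum_congr rfl fun b hb => card_isFirstIn_eq hb ha, sum_const, smul_eq_mul, mul_comm]
    _ = #(S.biUnion firstIn) := (card_biUnion hdisj).symm
    _ = Fintype.card (Perm α) := by rw [hcover, card_univ]

end Equiv.Perm

open Equiv Perm

theorem probPerm_isFirstIn {n : ℕ} {S : Finset (Fin n)} {a : Fin n} (ha : a ∈ S) :
    probPerm (fun σ : Perm (Fin n) => σ.IsFirstIn S a) = 1 / #S := by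
  classical
  have hprod := card_isFirstIn_mul_card ha
  have hne : #{σ : Perm (Fin n) | σ.IsFirstIn S a} ≠ 0 :=
    left_ne_zero_of_mul (hprod ▸ Fintype.card_ne_zero)
  rw [probPerm, ← hprod, Nat.cast_mul, div_mul_cancel_left₀ (by exact_mod_cast hne), one_div]

theorem eventA_iff_isFirstIn {n j k : ℕ} {a : Fin n} (ha : (a : ℕ) + 1 = j) (hkn : k ≤ n)
    (σ : Perm (Fin n)) :
    eventA σ j k ↔ σ.IsFirstIn ((Icc (min j k - 1) (max j k - 1)).attachFin
      fun m hm => by rw [mem_Icc] at hm; omega) a := by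
  constructor
  · intro h i hi hia
    rw [mem_attachFin, mem_Icc] at hi
    exact h a i ha (by omega) (by omega) fun h' => hia (Fin.ext (by omega))
  · intro h jf mf hjf hmin hmax hmj
    obtain rfl : jf = a := Fin.ext (by omega)
    exact h mf (by rw [mem_attachFin, mem_Icc]; omega) fun h' => hmj (by rw [h']; omega)

theorem probPerm_eventA_s5 {n j k : ℕ} (hj : 1 ≤ j) (hjn : j ≤ n) (hk : 1 ≤ k) (hkn : k ≤ n) :
    probPerm (fun σ : Perm (Fin n) => eventA σ j k)
      = 1 / (((max j k - min j k : ℕ) : ℝ) + 1) := by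
  have ha : ((⟨j - 1, by omega⟩ : Fin n) : ℕ) + 1 = j := by simp only; omega
  simp_rw [eventA_iff_isFirstIn ha hkn]
  rw [probPerm_isFirstIn (by rw [mem_attachFin, mem_Icc]; omega), card_attachFin, Nat.card_Icc]
  congr 1
  norm_cast
  omega

theorem expPerm_sum {n : ℕ} {ι : Type*} (s : Finset ι) (X : ι → Perm (Fin n) → ℝ) :
    expPerm (fun σ => ∑ i ∈ s, X i σ) = ∑ i ∈ s, expPerm (X i) := by
  simp only [expPerm]
  rw [sum_comm, sum_div]

theorem expPerm_const_mul {n : ℕ} (c : ℝ) (X : Perm (Fin n) → ℝ) :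
    expPerm (fun σ => c * X σ) = c * expPerm X := by
  simp only [expPerm, ← mul_sum, mul_div_assoc]

theorem expPerm_ind {n : ℕ} (E : Perm (Fin n) → Prop) :
    expPerm (fun σ => ind (E σ)) = probPerm E := by
  classical
  simp only [expPerm, probPerm, ind, sum_boole]

theorem expPerm_weightW_eq_sum {n : ℕ} (k : ℕ) :
    expPerm (fun σ : Perm (Fin n) => weightW σ k)
      = ∑ j : Fin n, ((j : ℕ) + 1 : ℝ) * probPerm (fun σ : Perm (Fin n) => eventA σ (j + 1) k) := by
  simp only [weightW, expPerm_sum, expPerm_const_mul, expPerm_ind]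

theorem sum_range_div_reflect (k : ℕ) :
    ∑ j ∈ range k, ((j : ℝ) + 1) / ((k - (j + 1) : ℕ) + 1) = (k + 1) * H1 k - k := by
  have hH : (k + 1) * H1 k - k = ∑ i ∈ range k, ((k + 1 : ℝ) / (i + 1) - 1) := by
    rw [H1, mul_sum, sum_sub_distrib, sum_const, card_range, nsmul_one]
    simp only [mul_one_div]
  rw [hH, ← sum_range_reflect]
  refine sum_congr rfl fun i hi => ?_
  rw [mem_range] at hi
  rw [show k - (k - 1 - i + 1) = i by omega, Nat.cast_sub (by omega : i ≤ k - 1),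
    Nat.cast_sub (by omega : 1 ≤ k)]
  field_simp
  ring

theorem sum_range_add_div_add_two (k m : ℕ) :
    ∑ i ∈ range m, ((k + i : ℕ) + 1 : ℝ) / ((i : ℝ) + 2) = (k - 1) * (H1 (m + 1) - 1) + m := by
  have hH : H1 (m + 1) - 1 = ∑ i ∈ range m, 1 / ((i : ℝ) + 2) := by
    rw [H1, sum_range_succ']
    push_cast
    simp only [add_assoc, one_add_one_eq_two, zero_add, div_one, add_sub_cancel_right]
  rw [hH, mul_sum, show (m : ℝ) = ∑ _i ∈ range m, 1 by simp, ← sum_add_distrib]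
  refine sum_congr rfl fun i _ => ?_
  push_cast
  field_simp
  ring

theorem expPerm_weightW {n k : ℕ} (hk : 1 ≤ k) (hkn : k ≤ n) :
    expPerm (fun σ : Perm (Fin n) => weightW σ k)
      = (k + 1) * H1 k + (k - 1) * H1 (n - k + 1) + n - 3 * k + 1 := by
  rw [expPerm_weightW_eq_sum, Fin.sum_univ_eq_sum_range
    (fun j => ((j : ℝ) + 1) * probPerm fun σ : Perm (Fin n) => eventA σ (j + 1) k),
    ← sum_range_add_sum_Ico _ hkn, sum_Ico_eq_sum_range]
  have below : ∀ j ∈ range k, ((j : ℝ) + 1) * probPerm (fun σ : Perm (Fin n) => eventA σ (j + 1) k)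
      = ((j : ℝ) + 1) / ((k - (j + 1) : ℕ) + 1) := fun j hj => by
    rw [mem_range] at hj
    rw [probPerm_eventA_s5 (by omega) (by omega) hk hkn, mul_one_div, max_eq_right (by omega),
      min_eq_left (by omega)]
  have above : ∀ i ∈ range (n - k),
      (((k + i : ℕ) : ℝ) + 1) * probPerm (fun σ : Perm (Fin n) => eventA σ (k + i + 1) k)
      = ((k + i : ℕ) + 1 : ℝ) / ((i : ℝ) + 2) := fun i hi => by
    rw [mem_range] at hi
    rw [probPerm_eventA_s5 (by omega) (by omega) hk hkn, mul_one_div, max_eq_left (by omega),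
      min_eq_right (by omega), show k + i + 1 - k = i + 1 by omega]
    push_cast
    ring
  rw [sum_congr rfl below, sum_congr rfl above, sum_range_div_reflect, sum_range_add_div_add_two,
    Nat.cast_sub hkn]
  ring

theorem H1_eq_harmonic (m : ℕ) : H1 m = harmonic m := by
  simp [H1, harmonic, one_div]

theorem log_le_H1 (m : ℕ) : Real.log m ≤ H1 m := by
  rw [H1_eq_harmonic]
  refine le_trans ?_ (log_add_one_le_harmonic m)
  rcases m.eq_zero_or_pos with rfl | hm
  · simp
  · exact Real.log_le_log (by positivity) (by push_cast; linarith)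

theorem H1_le_one_add_log (m : ℕ) : H1 m ≤ 1 + Real.log m := by
  rw [H1_eq_harmonic]
  exact harmonic_le_one_add_log m

theorem mul_H1_sub_log_mem_Icc {c : ℝ} (hc : 0 ≤ c) (m : ℕ) :
    c * (H1 m - Real.log m) ∈ Set.Icc 0 c :=
  ⟨mul_nonneg hc (sub_nonneg.2 (log_le_H1 m)),
    mul_le_of_le_one_right hc (by linarith [H1_le_one_add_log m])⟩

/-- There exists `C > 0` such that for all `n ≥ 2` and all `1 ≤ k ≤ n`,
`|E[W_k(n)] − k·log(k(n−k+1)) − n| ≤ C·(k + log n)`. -/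
theorem expectation_weightW_expansion :
    ∃ C : ℝ, 0 < C ∧ ∀ n : ℕ, 2 ≤ n → ∀ k : ℕ, 1 ≤ k → k ≤ n →
      |expPerm (fun σ : Equiv.Perm (Fin n) => weightW σ k)
          - (k : ℝ) * Real.log ((k : ℝ) * ((n : ℝ) - (k : ℝ) + 1)) - (n : ℝ)|
        ≤ C * ((k : ℝ) + Real.log n) := by
  refine ⟨5, by norm_num, fun n _ k hk hkn => ?_⟩
  set m := n - k + 1
  have hm : (n : ℝ) - k + 1 = m := by simp only [m]; push_cast [Nat.cast_sub hkn]; ring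
  have hk' : (1 : ℝ) ≤ k := by exact_mod_cast hk
  have hlogk : 0 ≤ Real.log k := Real.log_nonneg hk'
  have hlogm : 0 ≤ Real.log m := Real.log_nonneg (by simp [m])
  have hlogkn : Real.log k ≤ Real.log n := Real.log_le_log (by positivity) (by exact_mod_cast hkn)
  have hlogmn : Real.log m ≤ Real.log n :=
    Real.log_le_log (by positivity) (by simp only [m]; exact_mod_cast (by omega : n - k + 1 ≤ n))
  obtain ⟨hk₀, hk₁⟩ := mul_H1_sub_log_mem_Icc (by positivity : (0 : ℝ) ≤ k) k
  obtain ⟨hm₀, hm₁⟩ := mul_H1_sub_log_mem_Icc (by positivity : (0 : ℝ) ≤ k) m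
  rw [expPerm_weightW hk hkn, hm, Real.log_mul (by positivity) (by positivity), abs_le]
  constructor <;> linarith [log_le_H1 k, log_le_H1 m, H1_le_one_add_log k, H1_le_one_add_log m]
end

section
/- (Theorem 1, weighted depths of large nodes, first part.) Let (k_n) be a sequence of integers with 1 ≤ k_n ≤ n for all n and k_n·√(log n)/n → ∞ as n → ∞. Then, in the random permutation model on {1,…,n}, E[|W_{k_n}(n) − k_n·D_{k_n}(n)|] / (k_n·√(log n)) → 0 as n → ∞. -/
open Finset Filter Topology MeasureTheory

/-!
Uniform random insertion orders are invariant under left multiplication by a transposition, so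
every key of a set `S` is equally likely to be the first of `S` inserted; hence
`P(A_{j,k}) = 1/(|j - k| + 1)`. Since `W_k - k·D_k = k + Σ_j (j - k)·1_{A_{j,k}}`, its mean
absolute value is at most `k + Σ_j |j - k|·P(A_{j,k}) ≤ 2n`, which is `o(k_n √(log n))` by
hypothesis.
-/

namespace BSTDepth

variable {n : ℕ}

/-- `σ.symm x` is the insertion time of the key indexed by `x`. -/
def FirstIn (σ : Equiv.Perm (Fin n)) (S : Finset (Fin n)) (a : Fin n) : Prop :=
  ∀ x ∈ S, x ≠ a → σ.symm a < σ.symm x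

theorem FirstIn.eq {σ : Equiv.Perm (Fin n)} {S : Finset (Fin n)} {a b : Fin n}
    (ha : FirstIn σ S a) (hb : FirstIn σ S b) (haS : a ∈ S) (hbS : b ∈ S) : a = b := by
  by_contra hab
  exact lt_asymm (ha b hbS (Ne.symm hab)) (hb a haS hab)

theorem FirstIn.swap_mul {σ : Equiv.Perm (Fin n)} {S : Finset (Fin n)} {a b : Fin n}
    (h : FirstIn σ S a) (hb : b ∈ S) : FirstIn (Equiv.swap a b * σ) S b := by
  intro x hx hxb
  simp only [Equiv.Perm.mul_def, Equiv.symm_trans_apply, Equiv.symm_swap, Equiv.swap_apply_right]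
  rcases eq_or_ne x a with rfl | hxa
  · rw [Equiv.swap_apply_left]
    exact h b hb (Ne.symm hxb)
  · rw [Equiv.swap_apply_of_ne_of_ne hxa hxb]
    exact h x hx hxa

theorem firstIn_swap_mul_iff {σ : Equiv.Perm (Fin n)} {S : Finset (Fin n)} {a b : Fin n}
    (ha : a ∈ S) (hb : b ∈ S) : FirstIn (Equiv.swap a b * σ) S b ↔ FirstIn σ S a := by
  refine ⟨fun h => ?_, fun h => h.swap_mul hb⟩
  simpa [Equiv.swap_comm a b, ← mul_assoc] using h.swap_mul ha

theorem probPerm_nonneg (E : Equiv.Perm (Fin n) → Prop) : 0 ≤ probPerm E := by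
  unfold probPerm; positivity

theorem sum_probPerm_le_one {ι : Type*} (S : Finset ι) (E : ι → Equiv.Perm (Fin n) → Prop)
    (hE : ∀ σ, ∀ a ∈ S, ∀ b ∈ S, E a σ → E b σ → a = b) :
    ∑ a ∈ S, probPerm (E a) ≤ 1 := by
  classical
  have hcard : (0 : ℝ) < Fintype.card (Equiv.Perm (Fin n)) := by exact_mod_cast Fintype.card_pos
  simp only [probPerm, ← Finset.sum_div, div_le_one hcard]
  have hdisj : (S : Set ι).PairwiseDisjoint fun a => univ.filter (E a) := by
    intro a ha b hb hab
    simp only [Function.onFun, Finset.disjoint_filter]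
    exact fun σ _ hEa hEb => hab (hE σ a ha b hb hEa hEb)
  exact_mod_cast (card_biUnion hdisj).symm.trans_le (card_le_univ _)

theorem probPerm_firstIn_eq {S : Finset (Fin n)} {a b : Fin n} (ha : a ∈ S) (hb : b ∈ S) :
    probPerm (FirstIn · S a) = probPerm (FirstIn · S b) := by
  unfold probPerm
  congr 2
  exact Finset.card_equiv (Equiv.mulLeft (Equiv.swap a b)) fun σ => by
    simp [firstIn_swap_mul_iff ha hb]

theorem card_mul_probPerm_firstIn_le_one {S : Finset (Fin n)} {a : Fin n} (ha : a ∈ S) :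
    #S * probPerm (FirstIn · S a) ≤ 1 := by
  calc #S * probPerm (FirstIn · S a) = ∑ b ∈ S, probPerm (FirstIn · S b) := by
        rw [Finset.sum_congr rfl fun b hb => probPerm_firstIn_eq hb ha, sum_const, nsmul_eq_mul]
    _ ≤ 1 := sum_probPerm_le_one S _ fun σ a ha b hb h h' => h.eq h' ha hb

/-- The keys with labels between `a` and `b`; the index `m : Fin n` carries the label `m + 1`. -/
def nodesBetween (n a b : ℕ) : Finset (Fin n) :=
  univ.filter fun m => min a b ≤ (m : ℕ) + 1 ∧ (m : ℕ) + 1 ≤ max a b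

theorem map_valEmbedding_nodesBetween {a b : ℕ} (ha : a ≤ n) (hb : b ≤ n) :
    (nodesBetween n a b).map Fin.valEmbedding = Ico (min a b - 1) (max a b) := by
  ext m
  simp only [nodesBetween, Finset.mem_map, mem_filter, mem_univ, true_and, Fin.valEmbedding_apply,
    mem_Ico]
  constructor
  · rintro ⟨x, hx, rfl⟩
    omega
  · intro hm
    exact ⟨⟨m, by omega⟩, by dsimp only; omega, rfl⟩

theorem abs_sub_le_card_nodesBetween {a b : ℕ} (ha : a ≤ n) (hb : b ≤ n) :
    |(a : ℝ) - b| ≤ #(nodesBetween n a b) := by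
  rw [← card_map Fin.valEmbedding, map_valEmbedding_nodesBetween ha hb, Nat.card_Ico,
    ← max_sub_min_eq_abs', ← Nat.cast_max, ← Nat.cast_min, ← Nat.cast_sub min_le_max]
  exact_mod_cast (by omega : max a b - min a b ≤ max a b - (min a b - 1))

theorem eventA_iff_firstIn (σ : Equiv.Perm (Fin n)) (i : Fin n) (k : ℕ) :
    eventA σ ((i : ℕ) + 1) k ↔ FirstIn σ (nodesBetween n ((i : ℕ) + 1) k) i := by
  simp only [eventA, FirstIn, nodesBetween, mem_filter, mem_univ, true_and, Ne, ← Fin.val_inj]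
  constructor
  · intro h x hx hxi
    exact h i x rfl hx.1 hx.2 (by omega)
  · rintro h j x hj hmin hmax hxj
    obtain rfl : j = i := Fin.ext (by omega)
    exact h x ⟨hmin, hmax⟩ (by omega)

theorem abs_sub_mul_probPerm_eventA_le_one (i : Fin n) {k : ℕ} (hk : k ≤ n) :
    |((i : ℕ) + 1 : ℝ) - k| * probPerm (fun σ : Equiv.Perm (Fin n) => eventA σ ((i : ℕ) + 1) k)
      ≤ 1 := by
  have hi : (i : ℕ) + 1 ≤ n := i.isLt
  have hmem : i ∈ nodesBetween n ((i : ℕ) + 1) k := by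
    simp only [nodesBetween, mem_filter, mem_univ, true_and]
    omega
  simp only [eventA_iff_firstIn]
  calc |((i : ℕ) + 1 : ℝ) - k| * probPerm (FirstIn · (nodesBetween n ((i : ℕ) + 1) k) i)
      ≤ #(nodesBetween n ((i : ℕ) + 1) k) * probPerm (FirstIn · _ i) := by
        gcongr
        · exact probPerm_nonneg _
        · exact_mod_cast abs_sub_le_card_nodesBetween hi hk
    _ ≤ 1 := card_mul_probPerm_firstIn_le_one hmem

theorem ind_nonneg (P : Prop) : 0 ≤ ind P := by
  unfold ind; split <;> norm_num

theorem expPerm_mono {X Y : Equiv.Perm (Fin n) → ℝ} (h : ∀ σ, X σ ≤ Y σ) :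
    expPerm X ≤ expPerm Y :=
  div_le_div_of_nonneg_right (sum_le_sum fun σ _ => h σ) (Nat.cast_nonneg _)

theorem expPerm_nonneg {X : Equiv.Perm (Fin n) → ℝ} (h : ∀ σ, 0 ≤ X σ) :
    0 ≤ expPerm X :=
  div_nonneg (sum_nonneg fun σ _ => h σ) (Nat.cast_nonneg _)

theorem expPerm_add (X Y : Equiv.Perm (Fin n) → ℝ) :
    expPerm (fun σ => X σ + Y σ) = expPerm X + expPerm Y := by
  simp only [expPerm, sum_add_distrib, add_div]

theorem expPerm_sum {ι : Type*} (s : Finset ι) (X : ι → Equiv.Perm (Fin n) → ℝ) :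
    expPerm (fun σ => ∑ i ∈ s, X i σ) = ∑ i ∈ s, expPerm (X i) := by
  simp only [expPerm, sum_comm (s := univ), sum_div]

theorem expPerm_const (c : ℝ) : expPerm (fun _ : Equiv.Perm (Fin n) => c) = c := by
  have hcard : (Fintype.card (Equiv.Perm (Fin n)) : ℝ) ≠ 0 := by
    exact_mod_cast Fintype.card_ne_zero
  simp only [expPerm, sum_const, card_univ, nsmul_eq_mul]
  field_simp

theorem expPerm_mul_ind (c : ℝ) (E : Equiv.Perm (Fin n) → Prop) :
    expPerm (fun σ => c * ind (E σ)) = c * probPerm E := by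
  simp only [expPerm, probPerm, ← mul_sum, ind, sum_boole, mul_div_assoc]

theorem weightW_sub_mul_depthD (σ : Equiv.Perm (Fin n)) (k : ℕ) :
    weightW σ k - k * depthD σ k
      = ∑ j : Fin n, (((j : ℕ) + 1 : ℝ) - k) * ind (eventA σ ((j : ℕ) + 1) k) + k := by
  simp only [weightW, depthD, sub_mul, sum_sub_distrib, mul_sub, mul_sum]
  ring

theorem abs_weightW_sub_mul_depthD_le (σ : Equiv.Perm (Fin n)) (k : ℕ) :
    |weightW σ k - k * depthD σ k|
      ≤ ∑ j : Fin n, |((j : ℕ) + 1 : ℝ) - k| * ind (eventA σ ((j : ℕ) + 1) k) + k := by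
  rw [weightW_sub_mul_depthD]
  refine (abs_add_le _ _).trans (add_le_add ((abs_sum_le_sum_abs _ _).trans_eq ?_)
    (abs_of_nonneg (Nat.cast_nonneg k)).le)
  simp only [abs_mul, abs_of_nonneg (ind_nonneg _)]

theorem expPerm_abs_weightW_sub_mul_depthD_le {k : ℕ} (hk : k ≤ n) :
    expPerm (fun σ : Equiv.Perm (Fin n) => |weightW σ k - k * depthD σ k|) ≤ 2 * n := by
  calc expPerm (fun σ : Equiv.Perm (Fin n) => |weightW σ k - k * depthD σ k|)
      ≤ ∑ j : Fin n, |((j : ℕ) + 1 : ℝ) - k|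
          * probPerm (fun σ : Equiv.Perm (Fin n) => eventA σ ((j : ℕ) + 1) k) + k := by
        refine (expPerm_mono fun σ => abs_weightW_sub_mul_depthD_le σ k).trans_eq ?_
        simp only [expPerm_add, expPerm_sum, expPerm_mul_ind, expPerm_const]
    _ ≤ ∑ _j : Fin n, (1 : ℝ) + n := by
        gcongr with j
        exact abs_sub_mul_probPerm_eventA_le_one j hk
    _ = 2 * n := by
        simp only [sum_const, card_univ, Fintype.card_fin, nsmul_eq_mul, mul_one]
        ring

end BSTDepth

open BSTDepth

/-- Theorem 1, weighted depths of large nodes, first part.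
If `1 ≤ k_n ≤ n` and `k_n·√(log n)/n → ∞`, then
`E[|W_{k_n}(n) − k_n·D_{k_n}(n)|]/(k_n·√(log n)) → 0`. -/
theorem large_nodes_first_order (k : ℕ → ℕ) (hk : ∀ n : ℕ, 1 ≤ n → 1 ≤ k n ∧ k n ≤ n)
    (hgrow : Tendsto (fun n : ℕ => (k n : ℝ) * Real.sqrt (Real.log n) / n) atTop atTop) :
    Tendsto (fun n : ℕ =>
        expPerm (fun σ : Equiv.Perm (Fin n) => |weightW σ (k n) - (k n : ℝ) * depthD σ (k n)|)
          / ((k n : ℝ) * Real.sqrt (Real.log n)))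
      atTop (𝓝 0) := by
  have hbounded : ∀ᶠ n : ℕ in atTop, ‖expPerm (fun σ : Equiv.Perm (Fin n) =>
      |weightW σ (k n) - (k n : ℝ) * depthD σ (k n)|) / n‖ ≤ 2 := by
    filter_upwards [eventually_ge_atTop 1] with n hn
    have hn' : (0 : ℝ) < n := by exact_mod_cast hn
    rw [Real.norm_of_nonneg (div_nonneg (expPerm_nonneg fun σ => abs_nonneg _) hn'.le),
      div_le_iff₀ hn']
    exact expPerm_abs_weightW_sub_mul_depthD_le (hk n hn).2
  refine (hgrow.inv_tendsto_atTop.zero_mul_isBoundedUnder_le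
    (isBoundedUnder_of_eventually_le hbounded)).congr' ?_
  filter_upwards [eventually_ne_atTop 0] with n hn
  simp only [Pi.inv_apply, inv_div]
  field_simp
end

section
/- (Recursions for weighted path length and weighted Wiener index.) Let T be a finite rooted binary tree with real labels, nonempty, with root label x and left and right subtrees T₁ and T₂ (possibly empty). Then 𝐩(T) = 𝐩(T₁) + 𝐩(T₂) + |T|·x, and 𝐰(T) = 𝐰(T₁) + 𝐰(T₂) + (|T₂|+1)·𝐩(T₁) + (|T₁|+1)·𝐩(T₂) + (|T| + |T₁|·|T₂|)·x. -/
/-!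
The nodes of `node l x r` are the root, the nodes of `l` and the nodes of `r`. A weighted depth
in the big tree is `x` plus the weighted depth in the subtree, and the path between a node of
`l` and a node of `r` runs through the root, so its weight is the sum of their two weighted
depths plus `x`; pairs inside one subtree keep their weighted distance. Summing these local
formulas over the nine blocks of pairs of nodes gives both recursions.
-/

open Finset Filter Topology MeasureTheory

/-- finite rooted binary trees with real labels. -/
inductive BTree where
  | leaf : BTree
  | node : BTree → ℝ → BTree → BTree

namespace BTree

/-- number of nodes. -/
def size : BTree → ℕ
  | leaf => 0
  | node l _ r => size l + size r + 1

/-- the positions (root-to-node direction words, `false` = left) of all nodes. -/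
def positions : BTree → List (List Bool)
  | leaf => []
  | node l _ r => [] :: ((positions l).map (false :: ·) ++ (positions r).map (true :: ·))

/-- the label at a given position (junk value `0` outside of the tree). -/
noncomputable def labelAt : BTree → List Bool → ℝ
  | leaf, _ => 0
  | node _ x _, [] => x
  | node l _ _, false :: p => labelAt l p
  | node _ _ r, true :: p => labelAt r p

/-- weighted depth of the node at position `p`: the sum of all labels on the path
from the root to the node, endpoints included. -/
noncomputable def wdepth (t : BTree) (p : List Bool) : ℝ :=
  ∑ i ∈ Finset.range (p.length + 1), labelAt t (p.take i)

/-- weighted path length `𝐩(T)`: the sum of the weighted depths of all nodes. -/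
noncomputable def wpl (t : BTree) : ℝ := ((positions t).map (wdepth t)).sum

/-- longest common prefix of two positions (the position of the lowest common ancestor). -/
def commonPrefix : List Bool → List Bool → List Bool
  | a :: p, b :: q => if a = b then a :: commonPrefix p q else []
  | _, _ => []

/-- weighted distance between the nodes at positions `p` and `q`: the sum of all
labels on the path connecting them, endpoints included (for `p = q` it is the label at `p`). -/
noncomputable def wdist (t : BTree) (p q : List Bool) : ℝ :=
  wdepth t p + wdepth t q - 2 * wdepth t (commonPrefix p q) + labelAt t (commonPrefix p q)

/-- weighted Wiener index `𝐰(T)`: the sum of the weighted distances over all unordered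
pairs of nodes, pairs of a node with itself included. -/
noncomputable def wWiener (t : BTree) : ℝ :=
  (((positions t).map fun p => ((positions t).map fun q => wdist t p q).sum).sum
    + ((positions t).map fun p => wdist t p p).sum) / 2

/-- (unweighted) path length `p(T)`: the sum of the depths of all nodes. -/
noncomputable def pl (t : BTree) : ℝ := ((positions t).map fun p => (p.length : ℝ)).sum

/-- graph distance between the nodes at positions `p` and `q`. -/
noncomputable def gdist (p q : List Bool) : ℝ :=
  (p.length : ℝ) + (q.length : ℝ) - 2 * ((commonPrefix p q).length : ℝ)

/-- (unweighted) Wiener index `w(T)`: the sum of the graph distances over all unordered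
pairs of distinct nodes. -/
noncomputable def wiener (t : BTree) : ℝ :=
  (((positions t).map fun p => ((positions t).map fun q => gdist p q).sum).sum) / 2

/-- binary search tree insertion: go left at a node whose label is at least the key,
right otherwise. -/
noncomputable def insertBST : BTree → ℝ → BTree
  | leaf, y => node leaf y leaf
  | node l x r, y => if y ≤ x then node (insertBST l y) x r else node l x (insertBST r y)

/-- the binary search tree built by successively inserting the elements of a list. -/
noncomputable def bstOfList (l : List ℝ) : BTree := l.foldl insertBST leaf

/-- the subtree rooted at a given position. -/
def subtreeAt : BTree → List Bool → BTree
  | t, [] => t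
  | leaf, _ :: _ => leaf
  | node l _ _, false :: p => subtreeAt l p
  | node _ _ r, true :: p => subtreeAt r p

/-- height of a tree: the maximal depth of its nodes (measured from its root). -/
def heightT (t : BTree) : ℕ := ((positions t).map List.length).foldr max 0

/-- the list of all labels of a tree. -/
noncomputable def labels : BTree → List ℝ
  | leaf => []
  | node l x r => x :: (labels l ++ labels r)

/-- the largest label occurring in a tree (junk value `0` for the empty tree). -/
noncomputable def maxLabel (t : BTree) : ℝ := (labels t).foldr max 0

/-- the positions of the external nodes, in left-to-right (depth first search) order. -/
def extList : BTree → List (List Bool)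
  | leaf => [[]]
  | node l _ r => (extList l).map (false :: ·) ++ (extList r).map (true :: ·)

/-- weighted depth of an external node at position `p`: the sum of the labels of the
internal nodes on the path from the root to it. -/
noncomputable def wdepthExt (t : BTree) (p : List Bool) : ℝ :=
  ∑ i ∈ Finset.range p.length, labelAt t (p.take i)

lemma length_positions (t : BTree) : (positions t).length = size t := by
  induction t with
  | leaf => rfl
  | node l _ r ihl ihr => simp [positions, size, ihl, ihr]

lemma sum_map_positions_node (l r : BTree) (x : ℝ) (f : List Bool → ℝ) :
    ((positions (node l x r)).map f).sum
      = f [] + ((positions l).map fun p => f (false :: p)).sum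
        + ((positions r).map fun p => f (true :: p)).sum := by
  simp [positions, Function.comp_def, add_assoc]

lemma commonPrefix_nil_right (p : List Bool) : commonPrefix p [] = [] := by
  cases p <;> rfl

lemma wdepth_nil (t : BTree) : wdepth t [] = labelAt t [] := by
  simp [wdepth]

lemma wdepth_node_cons (l r : BTree) (x : ℝ) (b : Bool) (p : List Bool) :
    wdepth (node l x r) (b :: p) = x + wdepth (if b then r else l) p := by
  rw [wdepth, List.length_cons, Finset.sum_range_succ', wdepth]
  cases b <;> simp [labelAt, add_comm]

lemma wdepth_node_false (l r : BTree) (x : ℝ) (p : List Bool) :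
    wdepth (node l x r) (false :: p) = x + wdepth l p :=
  wdepth_node_cons l r x false p

lemma wdepth_node_true (l r : BTree) (x : ℝ) (p : List Bool) :
    wdepth (node l x r) (true :: p) = x + wdepth r p :=
  wdepth_node_cons l r x true p

lemma wdist_of_commonPrefix_eq_nil (t : BTree) {p q : List Bool} (h : commonPrefix p q = []) :
    wdist t p q = wdepth t p + wdepth t q - labelAt t [] := by
  rw [wdist, h, wdepth_nil]
  ring

lemma wdist_nil_left (t : BTree) (q : List Bool) : wdist t [] q = wdepth t q := by
  rw [wdist_of_commonPrefix_eq_nil t rfl, wdepth_nil]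
  ring

lemma wdist_nil_right (t : BTree) (p : List Bool) : wdist t p [] = wdepth t p := by
  rw [wdist_of_commonPrefix_eq_nil t (commonPrefix_nil_right p), wdepth_nil]
  ring

lemma wdist_node_cons_cons (l r : BTree) (x : ℝ) (b : Bool) (p q : List Bool) :
    wdist (node l x r) (b :: p) (b :: q) = wdist (if b then r else l) p q := by
  cases b <;>
    simp only [wdist, commonPrefix, wdepth_node_cons, labelAt, ↓reduceIte, Bool.false_eq_true] <;>
    ring

lemma wdist_node_false_false (l r : BTree) (x : ℝ) (p q : List Bool) :
    wdist (node l x r) (false :: p) (false :: q) = wdist l p q :=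
  wdist_node_cons_cons l r x false p q

lemma wdist_node_true_true (l r : BTree) (x : ℝ) (p q : List Bool) :
    wdist (node l x r) (true :: p) (true :: q) = wdist r p q :=
  wdist_node_cons_cons l r x true p q

lemma wdist_node_false_true (l r : BTree) (x : ℝ) (p q : List Bool) :
    wdist (node l x r) (false :: p) (true :: q) = wdepth l p + wdepth r q + x := by
  rw [wdist_of_commonPrefix_eq_nil _ rfl, wdepth_node_false, wdepth_node_true, labelAt]
  ring

lemma wdist_node_true_false (l r : BTree) (x : ℝ) (p q : List Bool) :
    wdist (node l x r) (true :: p) (false :: q) = wdepth r p + wdepth l q + x := by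
  rw [wdist_of_commonPrefix_eq_nil _ rfl, wdepth_node_false, wdepth_node_true, labelAt]
  ring

lemma wpl_node (l r : BTree) (x : ℝ) :
    wpl (node l x r) = wpl l + wpl r + (size (node l x r) : ℝ) * x := by
  simp only [wpl, sum_map_positions_node, wdepth_nil, labelAt, wdepth_node_false,
    wdepth_node_true, List.sum_map_add, List.map_const', List.sum_replicate, nsmul_eq_mul,
    length_positions, size, Nat.cast_add, Nat.cast_one]
  ring

lemma wWiener_node (l r : BTree) (x : ℝ) :
    wWiener (node l x r)
      = wWiener l + wWiener r + ((size r : ℝ) + 1) * wpl l + ((size l : ℝ) + 1) * wpl r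
        + ((size (node l x r) : ℝ) + (size l : ℝ) * (size r : ℝ)) * x := by
  simp only [wWiener, wpl, sum_map_positions_node, wdist_nil_left, wdist_nil_right,
    wdepth_nil, labelAt, wdepth_node_false, wdepth_node_true, wdist_node_false_false,
    wdist_node_true_true, wdist_node_false_true, wdist_node_true_false, List.sum_map_add,
    List.sum_map_mul_left, List.map_const', List.sum_replicate, nsmul_eq_mul,
    length_positions, size, Nat.cast_add, Nat.cast_one]
  ring

end BTree

open BTree in
/-- recursions for weighted path length and weighted Wiener index.
For a nonempty finite rooted binary tree with root label `x` and subtrees `T₁, T₂`: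
`𝐩(T) = 𝐩(T₁) + 𝐩(T₂) + |T|·x` and
`𝐰(T) = 𝐰(T₁) + 𝐰(T₂) + (|T₂|+1)·𝐩(T₁) + (|T₁|+1)·𝐩(T₂) + (|T| + |T₁|·|T₂|)·x`. -/
theorem wpl_wWiener_recursion (l r : BTree) (x : ℝ) :
    wpl (BTree.node l x r) = wpl l + wpl r + (size (BTree.node l x r) : ℝ) * x ∧
    wWiener (BTree.node l x r)
      = wWiener l + wWiener r + ((size r : ℝ) + 1) * wpl l + ((size l : ℝ) + 1) * wpl r
        + ((size (BTree.node l x r) : ℝ) + (size l : ℝ) * (size r : ℝ)) * x :=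
  ⟨wpl_node l r x, wWiener_node l r x⟩
end
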